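/- arXiv:1707.00837 — 6 statements merged into one kernel-verified Lean document; each statement's English description precedes it below -/
import Mathlib

section
/- Let L = Σ_{k=0}^n (a_k φ* + b_k) D^k be a differential operator with reflection, acting on smooth functions by (Lu)(t) = Σ_k a_k u^{(k)}(-t) + Σ_k b_k u^{(k)}(t), and let R = Σ_k a_k φ* D^k + Σ_l (-1)^{l+1} b_l D^l. Then R∘L = L∘R and this composition is a pure differential operator with constant coefficients (it contains no reflection term); concretely, for every smooth function u, (R(Lu))(t) = (L(Ru))(t) and R(Lu) can be written as Σ_{k=0}^{2n} c_k u^{(k)} for suitable constants c_k. -/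
open Finset

lemma my_iter_iter (j k : ℕ) (u : ℝ → ℝ) :
    iteratedDeriv k (iteratedDeriv j u) = iteratedDeriv (j + k) u := by
  induction k with
  | zero => simp
  | succ k ih => rw [iteratedDeriv_succ, ih, ← iteratedDeriv_succ, Nat.add_assoc]

lemma my_smooth_iter {u : ℝ → ℝ} (hu : ContDiff ℝ (⊤ : ℕ∞) u) (j : ℕ) :
    ContDiff ℝ (⊤ : ℕ∞) (iteratedDeriv j u) := by
  rw [iteratedDeriv_eq_iterate]
  exact hu.iterate_deriv j

lemma my_iteratedDeriv_add {f g : ℝ → ℝ} (hf : ContDiff ℝ (⊤ : ℕ∞) f)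
    (hg : ContDiff ℝ (⊤ : ℕ∞) g) (k : ℕ) (t : ℝ) :
    iteratedDeriv k (fun x => f x + g x) t = iteratedDeriv k f t + iteratedDeriv k g t := by
  have := iteratedDerivWithin_add (Set.mem_univ t) uniqueDiffOn_univ
    (f := f) (g := g) (n := k)
    (hf.contDiffWithinAt.of_le (by exact_mod_cast le_top))
    (hg.contDiffWithinAt.of_le (by exact_mod_cast le_top))
  simp only [iteratedDerivWithin_univ] at this
  exact this

lemma my_iteratedDeriv_const_mul {f : ℝ → ℝ} (hf : ContDiff ℝ (⊤ : ℕ∞) f) (c : ℝ)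
    (k : ℕ) (t : ℝ) :
    iteratedDeriv k (fun x => c * f x) t = c * iteratedDeriv k f t := by
  have := iteratedDerivWithin_const_mul (Set.mem_univ t) uniqueDiffOn_univ
    (f := f) (n := k) c (hf.contDiffWithinAt.of_le (by exact_mod_cast le_top))
  simp only [iteratedDerivWithin_univ] at this
  exact this

lemma my_iteratedDeriv_zero_fun (k : ℕ) : iteratedDeriv k (fun _ : ℝ => (0 : ℝ)) = fun _ => 0 := by
  induction k with
  | zero => simp
  | succ k ih => rw [iteratedDeriv_succ, ih]; simp

lemma my_iteratedDeriv_sum {ι : Type*} (s : Finset ι) (f : ι → ℝ → ℝ)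
    (hf : ∀ i ∈ s, ContDiff ℝ (⊤ : ℕ∞) (f i)) (k : ℕ) (t : ℝ) :
    iteratedDeriv k (fun x => ∑ i ∈ s, f i x) t = ∑ i ∈ s, iteratedDeriv k (f i) t := by
  induction s using Finset.cons_induction with
  | empty => simp [my_iteratedDeriv_zero_fun]
  | cons i s hi ih =>
    simp only [Finset.sum_cons]
    have hs : ContDiff ℝ (⊤ : ℕ∞) (fun x => ∑ j ∈ s, f j x) :=
      ContDiff.sum fun j hj => hf j (Finset.mem_cons_of_mem hj)
    calc iteratedDeriv k (fun x => f i x + ∑ j ∈ s, f j x) t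
        = iteratedDeriv k (f i) t + iteratedDeriv k (fun x => ∑ j ∈ s, f j x) t :=
          my_iteratedDeriv_add (hf i (Finset.mem_cons_self i s)) hs k t
      _ = _ := by rw [ih fun j hj => hf j (Finset.mem_cons_of_mem hj)]

lemma my_summand {u : ℝ → ℝ} (hu : ContDiff ℝ (⊤ : ℕ∞) u) (aj bj : ℝ) (j k : ℕ) (t : ℝ) :
    iteratedDeriv k (fun s => aj * iteratedDeriv j u (-s) + bj * iteratedDeriv j u s) t
      = aj * ((-1 : ℝ) ^ k * iteratedDeriv (j + k) u (-t)) + bj * iteratedDeriv (j + k) u t := by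
  have h1 : ContDiff ℝ (⊤ : ℕ∞) (fun s : ℝ => iteratedDeriv j u (-s)) :=
    (my_smooth_iter hu j).comp contDiff_neg
  rw [my_iteratedDeriv_add (contDiff_const.mul h1) (contDiff_const.mul (my_smooth_iter hu j)) k t,
    my_iteratedDeriv_const_mul h1, my_iteratedDeriv_const_mul (my_smooth_iter hu j),
    iteratedDeriv_comp_neg, my_iter_iter, smul_eq_mul]

/-- The operator `L = Σ (a_k φ* + b_k) D^k` acting on functions. -/
noncomputable def Lop (n : ℕ) (a b : ℕ → ℝ) (u : ℝ → ℝ) : ℝ → ℝ :=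
  fun t => ∑ k ∈ Finset.range (n + 1),
    (a k * iteratedDeriv k u (-t) + b k * iteratedDeriv k u t)

/-- The operator `R = Σ a_k φ* D^k + Σ (-1)^{l+1} b_l D^l` acting on functions. -/
noncomputable def Rop (n : ℕ) (a b : ℕ → ℝ) (u : ℝ → ℝ) : ℝ → ℝ :=
  fun t => ∑ k ∈ Finset.range (n + 1),
    (a k * iteratedDeriv k u (-t) + (-1 : ℝ) ^ (k + 1) * b k * iteratedDeriv k u t)

lemma my_Lop_smooth_summand {u : ℝ → ℝ} (hu : ContDiff ℝ (⊤ : ℕ∞) u) (aj bj : ℝ) (j : ℕ) :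
    ContDiff ℝ (⊤ : ℕ∞) (fun s : ℝ => aj * iteratedDeriv j u (-s) + bj * iteratedDeriv j u s) :=
  (contDiff_const.mul ((my_smooth_iter hu j).comp contDiff_neg)).add
    (contDiff_const.mul (my_smooth_iter hu j))

lemma my_Lop_iter {n : ℕ} {a b : ℕ → ℝ} {u : ℝ → ℝ} (hu : ContDiff ℝ (⊤ : ℕ∞) u)
    (k : ℕ) (t : ℝ) :
    iteratedDeriv k (Lop n a b u) t
      = ∑ j ∈ Finset.range (n + 1),
          (a j * ((-1 : ℝ) ^ k * iteratedDeriv (j + k) u (-t))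
            + b j * iteratedDeriv (j + k) u t) := by
  have : Lop n a b u = fun x => ∑ j ∈ Finset.range (n + 1),
      (fun s => a j * iteratedDeriv j u (-s) + b j * iteratedDeriv j u s) x := rfl
  rw [this, my_iteratedDeriv_sum _ _ (fun j _ => my_Lop_smooth_summand hu (a j) (b j) j)]
  exact Finset.sum_congr rfl fun j _ => my_summand hu _ _ j k t

lemma my_Rop_iter {n : ℕ} {a b : ℕ → ℝ} {u : ℝ → ℝ} (hu : ContDiff ℝ (⊤ : ℕ∞) u)
    (k : ℕ) (t : ℝ) :
    iteratedDeriv k (Rop n a b u) t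
      = ∑ j ∈ Finset.range (n + 1),
          (a j * ((-1 : ℝ) ^ k * iteratedDeriv (j + k) u (-t))
            + (-1 : ℝ) ^ (j + 1) * b j * iteratedDeriv (j + k) u t) := by
  have : Rop n a b u = fun x => ∑ j ∈ Finset.range (n + 1),
      (fun s => a j * iteratedDeriv j u (-s)
        + ((-1 : ℝ) ^ (j + 1) * b j) * iteratedDeriv j u s) x := rfl
  rw [this, my_iteratedDeriv_sum _ _
    (fun j _ => my_Lop_smooth_summand hu (a j) ((-1 : ℝ) ^ (j + 1) * b j) j)]
  exact Finset.sum_congr rfl fun j _ => my_summand hu _ _ j k t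

lemma my_DS_comm (n : ℕ) (g h f : ℕ → ℝ) :
    ∑ k ∈ Finset.range (n + 1), ∑ j ∈ Finset.range (n + 1), g k * h j * f (k + j)
      = ∑ k ∈ Finset.range (n + 1), ∑ j ∈ Finset.range (n + 1), h k * g j * f (k + j) := by
  rw [Finset.sum_comm]
  exact Finset.sum_congr rfl fun x _ => Finset.sum_congr rfl fun y _ => by
    rw [Nat.add_comm y x]; ring

theorem RL_eq_LR_and_pure (n : ℕ) (a b : ℕ → ℝ) :
    (∀ u : ℝ → ℝ, ContDiff ℝ (⊤ : ℕ∞) u → ∀ t : ℝ,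
      Rop n a b (Lop n a b u) t = Lop n a b (Rop n a b u) t) ∧
    ∃ c : ℕ → ℝ, ∀ u : ℝ → ℝ, ContDiff ℝ (⊤ : ℕ∞) u → ∀ t : ℝ,
      Rop n a b (Lop n a b u) t =
        ∑ k ∈ Finset.range (2 * n + 1), c k * iteratedDeriv k u t := by
  -- the pure part : A - B
  set c : ℕ → ℝ := fun m => ∑ k ∈ Finset.range (n + 1), ∑ j ∈ Finset.range (n + 1),
    (if k + j = m then (-1 : ℝ) ^ k * (a k * a j - b k * b j) else 0) with hc
  have key : ∀ u : ℝ → ℝ, ContDiff ℝ (⊤ : ℕ∞) u → ∀ t : ℝ,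
      Rop n a b (Lop n a b u) t
        = ∑ k ∈ Finset.range (n + 1), ∑ j ∈ Finset.range (n + 1),
            (((-1 : ℝ) ^ k * a k) * a j * iteratedDeriv (k + j) u t)
          - ∑ k ∈ Finset.range (n + 1), ∑ j ∈ Finset.range (n + 1),
            (((-1 : ℝ) ^ k * b k) * b j * iteratedDeriv (k + j) u t) := by
    intro u hu t
    have hu' : ContDiff ℝ (⊤ : ℕ∞) u := hu.of_le (by simp)
    have step1 : Rop n a b (Lop n a b u) t
        = ∑ k ∈ Finset.range (n + 1), ∑ j ∈ Finset.range (n + 1),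
            (a k * (a j * ((-1 : ℝ) ^ k * iteratedDeriv (j + k) u t)
                + b j * iteratedDeriv (j + k) u (-t))
              + (-1 : ℝ) ^ (k + 1) * b k *
                (a j * ((-1 : ℝ) ^ k * iteratedDeriv (j + k) u (-t))
                  + b j * iteratedDeriv (j + k) u t)) := by
      refine Finset.sum_congr rfl fun k _ => ?_
      rw [my_Lop_iter hu' k (-t), my_Lop_iter hu' k t, Finset.mul_sum, Finset.mul_sum,
        ← Finset.sum_add_distrib]
      exact Finset.sum_congr rfl fun j _ => by rw [neg_neg]
    have step2 : Rop n a b (Lop n a b u) t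
        = ∑ k ∈ Finset.range (n + 1), ∑ j ∈ Finset.range (n + 1),
            ((((-1 : ℝ) ^ k * a k) * a j * iteratedDeriv (k + j) u t
              - ((-1 : ℝ) ^ k * b k) * b j * iteratedDeriv (k + j) u t)
            + (a k * b j * iteratedDeriv (k + j) u (-t)
              - b k * a j * iteratedDeriv (k + j) u (-t))) := by
      rw [step1]
      refine Finset.sum_congr rfl fun k _ => Finset.sum_congr rfl fun j _ => ?_
      have h : ((-1 : ℝ) ^ k) * ((-1 : ℝ) ^ k) = 1 := by
        rw [← pow_add]; exact Even.neg_one_pow ⟨k, rfl⟩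
      rw [Nat.add_comm j k, pow_succ]
      linear_combination (-(b k * a j * iteratedDeriv (k + j) u (-t))) * h
    rw [step2]
    simp only [Finset.sum_add_distrib, Finset.sum_sub_distrib]
    have hCD : ∑ k ∈ Finset.range (n + 1), ∑ j ∈ Finset.range (n + 1),
          a k * b j * iteratedDeriv (k + j) u (-t)
        = ∑ k ∈ Finset.range (n + 1), ∑ j ∈ Finset.range (n + 1),
          b k * a j * iteratedDeriv (k + j) u (-t) :=
      my_DS_comm n a b (fun m => iteratedDeriv m u (-t))
    rw [hCD]
    ring
  have keyLR : ∀ u : ℝ → ℝ, ContDiff ℝ (⊤ : ℕ∞) u → ∀ t : ℝ,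
      Lop n a b (Rop n a b u) t
        = ∑ k ∈ Finset.range (n + 1), ∑ j ∈ Finset.range (n + 1),
            (((-1 : ℝ) ^ k * a k) * a j * iteratedDeriv (k + j) u t)
          - ∑ k ∈ Finset.range (n + 1), ∑ j ∈ Finset.range (n + 1),
            (((-1 : ℝ) ^ k * b k) * b j * iteratedDeriv (k + j) u t) := by
    intro u hu t
    have hu' : ContDiff ℝ (⊤ : ℕ∞) u := hu.of_le (by simp)
    have step1 : Lop n a b (Rop n a b u) t
        = ∑ k ∈ Finset.range (n + 1), ∑ j ∈ Finset.range (n + 1),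
            (a k * (a j * ((-1 : ℝ) ^ k * iteratedDeriv (j + k) u t)
                + (-1 : ℝ) ^ (j + 1) * b j * iteratedDeriv (j + k) u (-t))
              + b k * (a j * ((-1 : ℝ) ^ k * iteratedDeriv (j + k) u (-t))
                + (-1 : ℝ) ^ (j + 1) * b j * iteratedDeriv (j + k) u t)) := by
      refine Finset.sum_congr rfl fun k _ => ?_
      rw [my_Rop_iter hu' k (-t), my_Rop_iter hu' k t, Finset.mul_sum, Finset.mul_sum,
        ← Finset.sum_add_distrib]
      exact Finset.sum_congr rfl fun j _ => by rw [neg_neg]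
    have step2 : Lop n a b (Rop n a b u) t
        = ∑ k ∈ Finset.range (n + 1), ∑ j ∈ Finset.range (n + 1),
            ((((-1 : ℝ) ^ k * a k) * a j * iteratedDeriv (k + j) u t
              - b k * ((-1 : ℝ) ^ j * b j) * iteratedDeriv (k + j) u t)
            + (((-1 : ℝ) ^ k * b k) * a j * iteratedDeriv (k + j) u (-t)
              - a k * ((-1 : ℝ) ^ j * b j) * iteratedDeriv (k + j) u (-t))) := by
      rw [step1]
      refine Finset.sum_congr rfl fun k _ => Finset.sum_congr rfl fun j _ => ?_
      rw [Nat.add_comm j k]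
      simp only [pow_succ]
      ring
    rw [step2]
    simp only [Finset.sum_add_distrib, Finset.sum_sub_distrib]
    have hB : ∑ k ∈ Finset.range (n + 1), ∑ j ∈ Finset.range (n + 1),
          b k * ((-1 : ℝ) ^ j * b j) * iteratedDeriv (k + j) u t
        = ∑ k ∈ Finset.range (n + 1), ∑ j ∈ Finset.range (n + 1),
          ((-1 : ℝ) ^ k * b k) * b j * iteratedDeriv (k + j) u t :=
      my_DS_comm n b (fun m => (-1 : ℝ) ^ m * b m) (fun m => iteratedDeriv m u t)
    have hV : ∑ k ∈ Finset.range (n + 1), ∑ j ∈ Finset.range (n + 1),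
          ((-1 : ℝ) ^ k * b k) * a j * iteratedDeriv (k + j) u (-t)
        = ∑ k ∈ Finset.range (n + 1), ∑ j ∈ Finset.range (n + 1),
          a k * ((-1 : ℝ) ^ j * b j) * iteratedDeriv (k + j) u (-t) :=
      my_DS_comm n (fun m => (-1 : ℝ) ^ m * b m) a (fun m => iteratedDeriv m u (-t))
    rw [hB, hV]
    ring
  constructor
  · intro u hu t
    rw [key u hu t, keyLR u hu t]
  · refine ⟨c, fun u hu t => ?_⟩
    rw [key u hu t, hc]
    have expand : ∑ m ∈ Finset.range (2 * n + 1),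
        (∑ k ∈ Finset.range (n + 1), ∑ j ∈ Finset.range (n + 1),
          (if k + j = m then (-1 : ℝ) ^ k * (a k * a j - b k * b j) else 0))
          * iteratedDeriv m u t
        = ∑ k ∈ Finset.range (n + 1), ∑ j ∈ Finset.range (n + 1),
            (-1 : ℝ) ^ k * (a k * a j - b k * b j) * iteratedDeriv (k + j) u t := by
      simp only [Finset.sum_mul, ite_mul, zero_mul]
      rw [Finset.sum_comm]
      refine Finset.sum_congr rfl fun k hk => ?_
      rw [Finset.sum_comm]
      refine Finset.sum_congr rfl fun j hj => ?_
      rw [Finset.sum_ite_eq, if_pos (Finset.mem_range.mpr (by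
        have h1 := Finset.mem_range.mp hk
        have h2 := Finset.mem_range.mp hj
        omega))]
    rw [expand, ← Finset.sum_sub_distrib]
    refine Finset.sum_congr rfl fun k _ => ?_
    rw [← Finset.sum_sub_distrib]
    refine Finset.sum_congr rfl fun j _ => ?_
    ring
end

section
/- With L = Σ_{k=0}^n (a_k φ* + b_k) D^k and R = Σ_k a_k φ* D^k + Σ_l (-1)^{l+1} b_l D^l, the composition S = R∘L = Σ_{k=0}^{2n} c_k D^k has coefficients given by: c_k = 0 when k is odd, and c_k = 2 Σ_{l=0}^{k/2 - 1} (-1)^l (a_l a_{k-l} - b_l b_{k-l}) + (-1)^{k/2} (a_{k/2}² - b_{k/2}²) when k is even, where a_j = b_j = 0 for j > n. In particular c_0 = a_0² - b_0² and c_{2n} = (-1)^n (a_n² - b_n²). -/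
open Finset
open scoped ContDiff

/-- The coefficients of the reduced operator `S = RL`. -/
noncomputable def redCoeff (a b : ℕ → ℝ) (k : ℕ) : ℝ :=
  if Odd k then 0
  else 2 * ∑ l ∈ Finset.range (k / 2), (-1 : ℝ) ^ l * (a l * a (k - l) - b l * b (k - l))
        + (-1 : ℝ) ^ (k / 2) * ((a (k / 2)) ^ 2 - (b (k / 2)) ^ 2)

/-! ### Auxiliary calculus lemmas -/

lemma itd_iter (u : ℝ → ℝ) (j k : ℕ) :
    iteratedDeriv j (iteratedDeriv k u) = iteratedDeriv (j + k) u := by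
  rw [iteratedDeriv_eq_iterate, iteratedDeriv_eq_iterate,
    iteratedDeriv_eq_iterate (n := j + k), Function.iterate_add]
  rfl

lemma itd_smooth {u : ℝ → ℝ} (hu : ContDiff ℝ ∞ u) (k : ℕ) :
    ContDiff ℝ ∞ (iteratedDeriv k u) := by
  rw [iteratedDeriv_eq_iterate]; exact hu.iterate_deriv k

lemma itd_fsum {ι : Type*} (s : Finset ι) (F : ι → ℝ → ℝ)
    (hF : ∀ i ∈ s, ContDiff ℝ ∞ (F i)) (j : ℕ) (t : ℝ) :
    iteratedDeriv j (fun x => ∑ i ∈ s, F i x) t = ∑ i ∈ s, iteratedDeriv j (F i) t := by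
  have h := iteratedFDeriv_sum (𝕜 := ℝ) (f := F) (u := s) (i := j)
    (fun i hi => (hF i hi).of_le (by exact_mod_cast le_top))
  simp only [iteratedDeriv_eq_iteratedFDeriv]
  rw [show (fun x => ∑ i ∈ s, F i x) = (∑ i ∈ s, F i ·) from rfl, h]
  simp

lemma itd_add {f g : ℝ → ℝ} (hf : ContDiff ℝ ∞ f) (hg : ContDiff ℝ ∞ g) (j : ℕ) (t : ℝ) :
    iteratedDeriv j (fun x => f x + g x) t = iteratedDeriv j f t + iteratedDeriv j g t := by
  simp only [← iteratedDerivWithin_univ]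
  exact iteratedDerivWithin_add (Set.mem_univ t) uniqueDiffOn_univ
    (hf.of_le (by exact_mod_cast le_top)).contDiffWithinAt
    (hg.of_le (by exact_mod_cast le_top)).contDiffWithinAt

lemma itd_cmul (c : ℝ) {f : ℝ → ℝ} (hf : ContDiff ℝ ∞ f) (j : ℕ) (t : ℝ) :
    iteratedDeriv j (fun x => c * f x) t = c * iteratedDeriv j f t := by
  simp only [← iteratedDerivWithin_univ]
  exact iteratedDerivWithin_const_mul (Set.mem_univ t) uniqueDiffOn_univ c
    (hf.of_le (by exact_mod_cast le_top)).contDiffWithinAt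

lemma Lop_iter (n : ℕ) (a b : ℕ → ℝ) {u : ℝ → ℝ} (hu : ContDiff ℝ ∞ u) (j : ℕ) (t : ℝ) :
    iteratedDeriv j (Lop n a b u) t
      = ∑ k ∈ range (n + 1),
          (a k * ((-1 : ℝ) ^ j * iteratedDeriv (j + k) u (-t))
            + b k * iteratedDeriv (j + k) u t) := by
  have hneg : ∀ k : ℕ, ContDiff ℝ ∞ (fun x : ℝ => iteratedDeriv k u (-x)) :=
    fun k => (itd_smooth hu k).comp contDiff_neg
  have hsummand : ∀ k : ℕ, ContDiff ℝ ∞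
      (fun x : ℝ => a k * iteratedDeriv k u (-x) + b k * iteratedDeriv k u x) :=
    fun k => (contDiff_const.mul (hneg k)).add (contDiff_const.mul (itd_smooth hu k))
  have h1 : iteratedDeriv j (Lop n a b u) t
      = ∑ k ∈ range (n + 1),
          iteratedDeriv j
            (fun x : ℝ => a k * iteratedDeriv k u (-x) + b k * iteratedDeriv k u x) t := by
    unfold Lop
    exact itd_fsum _ _ (fun k _ => hsummand k) j t
  rw [h1]
  refine Finset.sum_congr rfl fun k _ => ?_
  rw [itd_add (contDiff_const.mul (hneg k)) (contDiff_const.mul (itd_smooth hu k)),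
    itd_cmul _ (hneg k), itd_cmul _ (itd_smooth hu k)]
  rw [iteratedDeriv_comp_neg j (iteratedDeriv k u) t]
  rw [itd_iter]
  simp [smul_eq_mul]

/-! ### Combinatorial lemmas -/

lemma reindex (n : ℕ) (H : ℕ → ℕ → ℝ) (h1 : ∀ j k, n < j → H j k = 0)
    (h2 : ∀ j k, n < k → H j k = 0) :
    ∑ j ∈ range (n + 1), ∑ k ∈ range (n + 1), H j k
      = ∑ m ∈ range (2 * n + 1), ∑ l ∈ range (m + 1), H l (m - l) := by
  have hRHS : ∑ m ∈ range (2 * n + 1), ∑ l ∈ range (m + 1), H l (m - l)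
      = ∑ p ∈ (range (2 * n + 1) ×ˢ range (2 * n + 1)).filter (fun p => p.1 + p.2 ≤ 2 * n),
          H p.1 p.2 := by
    rw [Finset.sum_sigma']
    refine Finset.sum_nbij' (fun x => (x.2, x.1 - x.2)) (fun p => ⟨p.1 + p.2, p.1⟩)
      ?_ ?_ ?_ ?_ ?_
    · rintro ⟨m, l⟩ hx
      simp only [mem_sigma, mem_range] at hx
      simp only [mem_filter, mem_product, mem_range]
      omega
    · rintro ⟨j, k⟩ hp
      simp only [mem_filter, mem_product, mem_range] at hp
      simp only [mem_sigma, mem_range]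
      omega
    · rintro ⟨m, l⟩ hx
      simp only [mem_sigma, mem_range] at hx
      have h : l + (m - l) = m := by omega
      simp [h]
    · rintro ⟨j, k⟩ hp
      show (j, j + k - j) = (j, k)
      simp
    · rintro ⟨m, l⟩ hx
      rfl
  rw [hRHS, ← Finset.sum_product']

  have hsub : range (n + 1) ×ˢ range (n + 1) ⊆
      (range (2 * n + 1) ×ˢ range (2 * n + 1)).filter (fun p => p.1 + p.2 ≤ 2 * n) := by
    intro p hp
    simp only [mem_product, mem_range] at hp
    simp only [mem_filter, mem_product, mem_range]
    omega
  refine Finset.sum_subset hsub fun p hpT hpQ => ?_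
  simp only [mem_filter, mem_product, mem_range] at hpT
  simp only [mem_product, mem_range] at hpQ
  by_cases h : n < p.1
  · exact h1 _ _ h
  · exact h2 _ _ (by omega)

lemma neg_one_pow_sub {m l : ℕ} (hl : l ≤ m) :
    ((-1 : ℝ)) ^ (m - l) = (-1 : ℝ) ^ m * (-1 : ℝ) ^ l := by
  have h2 : ((-1 : ℝ)) ^ l * (-1 : ℝ) ^ l = 1 := by
    rw [← pow_add, ← two_mul, pow_mul]; norm_num
  calc ((-1 : ℝ)) ^ (m - l) = (-1 : ℝ) ^ (m - l) * ((-1 : ℝ) ^ l * (-1 : ℝ) ^ l) := by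
        rw [h2, mul_one]
    _ = ((-1 : ℝ) ^ (m - l) * (-1 : ℝ) ^ l) * (-1 : ℝ) ^ l := by ring
    _ = (-1 : ℝ) ^ m * (-1 : ℝ) ^ l := by rw [← pow_add, Nat.sub_add_cancel hl]

lemma dm_eq (a b : ℕ → ℝ) (m : ℕ) :
    ∑ l ∈ range (m + 1), (-1 : ℝ) ^ l * (a l * a (m - l) - b l * b (m - l))
      = redCoeff a b m := by
  set f : ℕ → ℝ := fun l => (-1 : ℝ) ^ l * (a l * a (m - l) - b l * b (m - l)) with hf
  have hrefl : ∀ l ≤ m, f (m - l) = (-1 : ℝ) ^ m * f l := by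
    intro l hl
    simp only [hf, Nat.sub_sub_self hl]
    rw [neg_one_pow_sub hl]
    ring
  by_cases hodd : Odd m
  · have hcancel : ∑ l ∈ range (m + 1), f l = -∑ l ∈ range (m + 1), f l := by
      calc ∑ l ∈ range (m + 1), f l = ∑ l ∈ range (m + 1), f (m + 1 - 1 - l) :=
            (Finset.sum_range_reflect f (m + 1)).symm
        _ = ∑ l ∈ range (m + 1), (-1 : ℝ) ^ m * f l := by
            refine Finset.sum_congr rfl fun l hl => ?_
            simp only [Nat.add_sub_cancel]
            exact hrefl l (by simpa [Nat.lt_succ_iff] using hl)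
        _ = -∑ l ∈ range (m + 1), f l := by
            rw [← Finset.mul_sum, hodd.neg_one_pow]; ring
    have hzero : ∑ l ∈ range (m + 1), f l = 0 := by linarith
    rw [hzero, redCoeff, if_pos hodd]
  · have heven : Even m := Nat.not_odd_iff_even.mp hodd
    obtain ⟨p, hpp⟩ := heven
    have hm : m = 2 * p := by omega
    have hsym : ∀ l ≤ m, f (m - l) = f l := by
      intro l hl
      rw [hrefl l hl, Even.neg_one_pow (by rw [hm]; exact even_two_mul p), one_mul]
    have h0 : ∑ l ∈ range (m + 1), f l
        = ∑ l ∈ Finset.Ico 0 (p + 1), f l + ∑ l ∈ Finset.Ico (p + 1) (m + 1), f l := by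
      rw [Finset.sum_Ico_consecutive f (Nat.zero_le (p + 1)) (by omega : p + 1 ≤ m + 1),
        Nat.Ico_zero_eq_range]
    have h1 : ∑ l ∈ Finset.Ico (p + 1) (m + 1), f l = ∑ i ∈ range p, f (p + 1 + i) := by
      rw [Finset.sum_Ico_eq_sum_range]
      have : m + 1 - (p + 1) = p := by omega
      rw [this]
    have h2 : ∑ i ∈ range p, f (p + 1 + i) = ∑ i ∈ range p, f (p - 1 - i) := by
      refine Finset.sum_congr rfl fun i hi => ?_
      simp only [mem_range] at hi
      have e1 : p + 1 + i = m - (p - 1 - i) := by omega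
      rw [e1, hsym _ (by omega : p - 1 - i ≤ m)]
    have h3 : ∑ i ∈ range p, f (p - 1 - i) = ∑ i ∈ range p, f i :=
      Finset.sum_range_reflect f p
    have hsplit : ∑ l ∈ range (m + 1), f l = 2 * ∑ l ∈ range p, f l + f p := by
      rw [h0, h1, h2, h3, Nat.Ico_zero_eq_range, Finset.sum_range_succ]
      ring
    rw [hsplit, redCoeff, if_neg hodd]
    have hp2 : m / 2 = p := by omega
    have hmp : m - p = p := by omega
    rw [hp2]
    simp only [hf, hmp]
    ring

lemma key (n : ℕ) (a b : ℕ → ℝ)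
    (ha : ∀ j, n < j → a j = 0) (hb : ∀ j, n < j → b j = 0) (F G : ℕ → ℝ) :
    ∑ j ∈ range (n + 1), ∑ k ∈ range (n + 1),
        ((-1 : ℝ) ^ j * (a j * a k - b j * b k) * F (j + k)
          + (a j * b k - b j * a k) * G (j + k))
      = ∑ m ∈ range (2 * n + 1), redCoeff a b m * F m := by
  simp only [Finset.sum_add_distrib]
  have hG : ∑ j ∈ range (n + 1), ∑ k ∈ range (n + 1),
      (a j * b k - b j * a k) * G (j + k) = 0 := by
    have hswap : ∑ j ∈ range (n + 1), ∑ k ∈ range (n + 1), b j * a k * G (j + k)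
        = ∑ j ∈ range (n + 1), ∑ k ∈ range (n + 1), a j * b k * G (j + k) := by
      rw [Finset.sum_comm]
      refine Finset.sum_congr rfl fun j _ => Finset.sum_congr rfl fun k _ => ?_
      rw [Nat.add_comm]; ring
    simp only [sub_mul, Finset.sum_sub_distrib]
    rw [hswap, sub_self]
  rw [hG, add_zero]
  have hre := reindex n (fun j k => (-1 : ℝ) ^ j * (a j * a k - b j * b k) * F (j + k))
    (fun j k hj => by simp [ha j hj, hb j hj])
    (fun j k hk => by simp [ha k hk, hb k hk])
  rw [hre]
  refine Finset.sum_congr rfl fun m hm => ?_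
  rw [← dm_eq a b m, Finset.sum_mul]
  refine Finset.sum_congr rfl fun l hl => ?_
  simp only [mem_range, Nat.lt_succ_iff] at hl
  show (-1 : ℝ) ^ l * (a l * a (m - l) - b l * b (m - l)) * F (l + (m - l))
      = (-1 : ℝ) ^ l * (a l * a (m - l) - b l * b (m - l)) * F m
  rw [Nat.add_sub_cancel' hl]

theorem reduced_coefficients (n : ℕ) (a b : ℕ → ℝ)
    (ha : ∀ j, n < j → a j = 0) (hb : ∀ j, n < j → b j = 0) :
    (∀ u : ℝ → ℝ, ContDiff ℝ (⊤ : ℕ∞) u → ∀ t : ℝ,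
      Rop n a b (Lop n a b u) t =
        ∑ k ∈ Finset.range (2 * n + 1), redCoeff a b k * iteratedDeriv k u t) ∧
    redCoeff a b 0 = (a 0) ^ 2 - (b 0) ^ 2 ∧
    redCoeff a b (2 * n) = (-1 : ℝ) ^ n * ((a n) ^ 2 - (b n) ^ 2) := by
  refine ⟨?_, ?_, ?_⟩
  · intro u hu t
    have hu' : ContDiff ℝ ∞ u := hu.of_le (by simp)
    have hL1 : ∀ j : ℕ, iteratedDeriv j (Lop n a b u) (-t)
        = ∑ k ∈ range (n + 1),
            (a k * ((-1 : ℝ) ^ j * iteratedDeriv (j + k) u t)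
              + b k * iteratedDeriv (j + k) u (-t)) := by
      intro j
      rw [Lop_iter n a b hu' j (-t)]
      simp only [neg_neg]
    have hL2 : ∀ j : ℕ, iteratedDeriv j (Lop n a b u) t
        = ∑ k ∈ range (n + 1),
            (a k * ((-1 : ℝ) ^ j * iteratedDeriv (j + k) u (-t))
              + b k * iteratedDeriv (j + k) u t) :=
      fun j => Lop_iter n a b hu' j t
    have hexp : Rop n a b (Lop n a b u) t
        = ∑ j ∈ range (n + 1), ∑ k ∈ range (n + 1),
            ((-1 : ℝ) ^ j * (a j * a k - b j * b k) * iteratedDeriv (j + k) u t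
              + (a j * b k - b j * a k) * iteratedDeriv (j + k) u (-t)) := by
      unfold Rop
      refine Finset.sum_congr rfl fun j _ => ?_
      rw [hL1 j, hL2 j, Finset.mul_sum, Finset.mul_sum, ← Finset.sum_add_distrib]
      refine Finset.sum_congr rfl fun k _ => ?_
      have he : ((-1 : ℝ) ^ j) * ((-1 : ℝ) ^ j) = 1 := by
        rw [← pow_add, ← two_mul, pow_mul]; norm_num
      have hp : ((-1 : ℝ)) ^ (j + 1) = -((-1 : ℝ) ^ j) := by rw [pow_succ]; ring
      rw [hp]
      linear_combination (-(b j * a k * iteratedDeriv (j + k) u (-t))) * he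
    rw [hexp]
    exact key n a b ha hb (fun m => iteratedDeriv m u t) (fun m => iteratedDeriv m u (-t))
  · norm_num [redCoeff]
  · have hodd : ¬ Odd (2 * n) := Nat.not_odd_iff_even.mpr (even_two_mul n)
    rw [redCoeff, if_neg hodd]
    have h2 : 2 * n / 2 = n := by omega
    rw [h2]
    have hz : ∑ l ∈ Finset.range n, (-1 : ℝ) ^ l * (a l * a (2 * n - l) - b l * b (2 * n - l))
        = 0 := by
      refine Finset.sum_eq_zero fun l hl => ?_
      simp only [mem_range] at hl
      rw [ha (2 * n - l) (by omega), hb (2 * n - l) (by omega)]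
      ring
    rw [hz]
    ring
end

section
/- Let p(x) = Σ_{k=0}^n α_{2k} x^{2k} be a real polynomial of degree 2n and set p̃(y) = Σ_{k=0}^n α_{2k} y^k (so p(x) = p̃(x²)). If p̃ has no negative real roots, then there exists a REAL polynomial q of degree n such that p = α_{2n} · q · q_-, where q_- is the polynomial with the same leading coefficient and opposite roots. -/
/-!
Write `p(x) = p̃(x²)` and factor the monic normalisation of `p̃` over `ℝ` into monic linear and
quadratic factors; each factor `f` is of the form `f(x²) = q(x) q₋(x)` for a real monic `q`, and
such factorisations multiply. A linear factor `y - r` has `r ≥ 0`, as `p̃` has no negative roots,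
and `x² - r = (x - √r)(x + √r)`. A quadratic factor `y² + b y + c` without negative roots has
`c ≥ 0` and `b ≤ 2√c`, and then with `v = √c`, `u = √(2v - b)`,
`x⁴ + b x² + c = (x² + u x + v)(x² - u x + v)`.
-/

open Polynomial

/-- `q_-`: the real polynomial with the same leading coefficient and opposite roots,
given by `q_-(x) = (-1)^n q(-x)` for `q` of degree `n`. -/
noncomputable def qMinusR (n : ℕ) (q : Polynomial ℝ) : Polynomial ℝ :=
  C ((-1 : ℝ) ^ n) * q.comp (-X)

theorem nonneg_and_le_two_sqrt_of_forall_neg_ne_zero {b c : ℝ}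
    (hroot : ∀ y < 0, y ^ 2 + b * y + c ≠ 0) : 0 ≤ c ∧ b ≤ 2 * √c := by
  by_contra hbad
  -- otherwise the smaller root `(-b - s) / 2`, `s = √(b² - 4c)`, is real and negative
  have hdisc : 0 ≤ b ^ 2 - 4 * c ∧ -b < √(b ^ 2 - 4 * c) := by
    rcases le_or_gt 0 c with hc | hc
    · have hb : 2 * √c < b := lt_of_not_ge fun hb ↦ hbad ⟨hc, hb⟩
      have hdisc : 0 ≤ b ^ 2 - 4 * c := by nlinarith [Real.sq_sqrt hc, Real.sqrt_nonneg c]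
      exact ⟨hdisc, by linarith [Real.sqrt_nonneg c, Real.sqrt_nonneg (b ^ 2 - 4 * c)]⟩
    · have hdisc : 0 ≤ b ^ 2 - 4 * c := by nlinarith [sq_nonneg b]
      refine ⟨hdisc, ?_⟩
      nlinarith [Real.sq_sqrt hdisc, Real.sqrt_nonneg (b ^ 2 - 4 * c)]
  have hs := Real.sq_sqrt hdisc.1
  exact hroot ((-b - √(b ^ 2 - 4 * c)) / 2) (by linarith [hdisc.2]) (by linear_combination hs / 4)

theorem expand_contract_of_coeff_eq_zero {R : Type*} [CommSemiring R] {p : ℕ} (hp : p ≠ 0)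
    {f : R[X]} (hf : ∀ k, ¬p ∣ k → f.coeff k = 0) : expand R p (contract p f) = f := by
  ext k
  rw [coeff_expand (Nat.pos_of_ne_zero hp), coeff_contract hp]
  split_ifs with h
  · rw [Nat.div_mul_cancel h]
  · exact (hf k h).symm

/-- The roots of such an `m` are the squares of those of `q` (Graeffe's root-squaring). -/
def IsGraeffeTransform (m : ℝ[X]) (d : ℕ) : Prop :=
  ∃ q : ℝ[X], IsMonicOfDegree q d ∧ m.comp (X ^ 2) = q * qMinusR d q

namespace IsGraeffeTransform

theorem one : IsGraeffeTransform 1 0 :=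
  ⟨1, isMonicOfDegree_zero_iff.mpr rfl, by simp [qMinusR]⟩

theorem mul {f g : ℝ[X]} {d e : ℕ} (hf : IsGraeffeTransform f d) (hg : IsGraeffeTransform g e) :
    IsGraeffeTransform (f * g) (d + e) := by
  obtain ⟨q, hq, hfq⟩ := hf
  obtain ⟨r, hr, hgr⟩ := hg
  refine ⟨q * r, hq.mul hr, ?_⟩
  rw [mul_comp, hfq, hgr]
  simp only [qMinusR, mul_comp, pow_add, C_mul]
  ring

theorem X_add_C {r : ℝ} (hr : r ≤ 0) : IsGraeffeTransform (X + C r) 1 := by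
  refine ⟨X - C √(-r), isMonicOfDegree_X_sub_one _, ?_⟩
  have hsq : C √(-r) ^ 2 = -C r := by rw [← C_pow, Real.sq_sqrt (neg_nonneg.mpr hr), C_neg]
  simp only [qMinusR, add_comp, sub_comp, X_comp, C_comp, pow_one, map_neg, map_one]
  linear_combination hsq

theorem quadratic {b c : ℝ} (hc : 0 ≤ c) (hb : b ≤ 2 * √c) :
    IsGraeffeTransform (X ^ 2 + C b * X + C c) 2 := by
  set v := √c
  set u := √(2 * v - b)
  refine ⟨X ^ 2 + C u * X + C v, isMonicOfDegree_add_add_two u v, ?_⟩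
  have hv : C v ^ 2 = C c := by rw [← C_pow, Real.sq_sqrt hc]
  have hu : C u ^ 2 = 2 * C v - C b := by
    rw [← C_pow, Real.sq_sqrt (by linarith), C_sub, C_mul, C_ofNat]
  simp only [qMinusR, add_comp, mul_comp, pow_comp, X_comp, C_comp, neg_one_sq, map_one]
  linear_combination X ^ 2 * hu - hv

end IsGraeffeTransform

theorem IsGraeffeTransform.of_isMonicOfDegree {m : ℝ[X]} {d : ℕ} (hm : IsMonicOfDegree m d)
    (hroot : ∀ y < 0, m.eval y ≠ 0) : IsGraeffeTransform m d := by
  induction d using Nat.strong_induction_on generalizing m with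
  | _ d ih =>
  rcases d with _ | d
  · rw [isMonicOfDegree_zero_iff.mp hm]
    exact .one
  obtain ⟨f, g, hf, rfl⟩ := hm.eq_isMonicOfDegree_one_or_two_mul
  have hfroot : ∀ y < 0, f.eval y ≠ 0 := fun y hy h ↦ hroot y hy (by simp [h])
  have hgroot : ∀ y < 0, g.eval y ≠ 0 := fun y hy h ↦ hroot y hy (by simp [h])
  have of_factor {k : ℕ} (hk : 0 < k) (hf : IsMonicOfDegree f k) (hfG : IsGraeffeTransform f k) :
      IsGraeffeTransform (f * g) (d + 1) := by
    have hg : IsMonicOfDegree g g.natDegree := ⟨rfl, hf.monic.of_mul_monic_left hm.monic⟩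
    have hdeg : k + g.natDegree = d + 1 := by rw [← (hf.mul hg).natDegree_eq, hm.natDegree_eq]
    exact hdeg ▸ hfG.mul (ih _ (by omega) hg hgroot)
  rcases hf with hf | hf
  · obtain ⟨r, rfl⟩ := isMonicOfDegree_one_iff.mp hf
    have hr : r ≤ 0 := not_lt.mp fun hr ↦ hfroot (-r) (by linarith) (by simp)
    exact of_factor one_pos hf (.X_add_C hr)
  · obtain ⟨b, c, rfl⟩ := isMonicOfDegree_two_iff.mp hf
    obtain ⟨hc, hb⟩ := nonneg_and_le_two_sqrt_of_forall_neg_ne_zero fun y hy ↦ by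
      simpa using hfroot y hy
    exact of_factor two_pos hf (.quadratic hc hb)

theorem exists_isMonicOfDegree_comp_X_sq_eq {p : ℝ[X]} (hp : p ≠ 0)
    (hroot : ∀ y < 0, p.eval y ≠ 0) :
    ∃ q : ℝ[X], IsMonicOfDegree q p.natDegree ∧
      p.comp (X ^ 2) = C p.leadingCoeff * (q * qMinusR p.natDegree q) := by
  have hlc : p.leadingCoeff ≠ 0 := leadingCoeff_ne_zero.mpr hp
  have hm : IsMonicOfDegree (C p.leadingCoeff⁻¹ * p) p.natDegree :=
    ⟨natDegree_C_mul (inv_ne_zero hlc),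
      monic_C_mul_of_mul_leadingCoeff_eq_one (inv_mul_cancel₀ hlc)⟩
  have hmroot : ∀ y < 0, (C p.leadingCoeff⁻¹ * p).eval y ≠ 0 := fun y hy ↦ by
    rw [eval_mul, eval_C]
    exact mul_ne_zero (inv_ne_zero hlc) (hroot y hy)
  obtain ⟨q, hq, h⟩ := IsGraeffeTransform.of_isMonicOfDegree hm hmroot
  refine ⟨q, hq, ?_⟩
  rw [← h, mul_comp, C_comp, ← mul_assoc, ← C_mul, mul_inv_cancel₀ hlc, C_1, one_mul]

theorem even_poly_real_factorization (n : ℕ) (p : Polynomial ℝ)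
    (hdeg : p.natDegree = 2 * n)
    (hlead : p.coeff (2 * n) ≠ 0)
    (heven : ∀ k, Odd k → p.coeff k = 0)
    (hnoneg : ∀ y : ℝ, y < 0 →
      (∑ k ∈ Finset.range (n + 1), p.coeff (2 * k) * y ^ k) ≠ 0) :
    ∃ q : Polynomial ℝ, q.Monic ∧ q.natDegree = n ∧
      p = C (p.coeff (2 * n)) * q * qMinusR n q := by
  have hexpand : expand ℝ 2 (contract 2 p) = p := expand_contract_of_coeff_eq_zero two_ne_zero
    fun k hk ↦ heven k (Nat.odd_iff.mpr (Nat.two_dvd_ne_zero.mp hk))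
  set p' := contract 2 p
  have hdeg' : p'.natDegree = n := by
    have := natDegree_expand 2 p'
    rw [hexpand, hdeg] at this
    omega
  have hcoeff (k : ℕ) : p'.coeff k = p.coeff (2 * k) := by
    rw [coeff_contract two_ne_zero, mul_comm]
  have hlc : p'.leadingCoeff = p.coeff (2 * n) := by rw [leadingCoeff, hdeg', hcoeff]
  have hroot : ∀ y < 0, p'.eval y ≠ 0 := fun y hy ↦ by
    simpa only [eval_eq_sum_range, hdeg', hcoeff] using hnoneg y hy
  obtain ⟨q, hq, h⟩ :=
    exists_isMonicOfDegree_comp_X_sq_eq (leadingCoeff_ne_zero.mp (hlc ▸ hlead)) hroot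
  rw [hdeg'] at hq h
  rw [hlc] at h
  refine ⟨q, hq.monic, hq.natDegree_eq, ?_⟩
  rw [mul_assoc, ← h, ← expand_eq_comp_X_pow, hexpand]
end

section
/- Real solutions of the n=2 reduction system: assume a_2² - b_2² ≠ 0 and that the quadratic (a_2²-b_2²)y² + (-a_1²+2a_0a_2+b_1²-2b_0b_2)y + (a_0²-b_0²) has complex (non-real) roots, i.e., (b_0²-a_0²)(b_2²-a_2²) > 0 and |-a_1²+2a_0a_2+b_1²-2b_0b_2| < 2√((b_0²-a_0²)(b_2²-a_2²)). Then α_0 = √((b_0²-a_0²)/(b_2²-a_2²)) and α_1 = ±√((2·sign(a_2²-b_2²)·√((b_0²-a_0²)(b_2²-a_2²)) - (-a_1²+2a_0a_2+b_1²-2b_0b_2))/(a_2²-b_2²)) are well-defined real numbers solving the system a_0²-b_0² = (a_2²-b_2²)α_0² and -a_1²+2a_0a_2+b_1²-2b_0b_2 = (a_2²-b_2²)(2α_0 - α_1²). -/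
/-!
With `A = b₀² - a₀²`, `B = b₂² - a₂²`, `D = a₂² - b₂² = -B`, `σ = sign D` and `M` the middle
coefficient of the quadratic, one has
`√(A / B) = √(A B) / |D|`, so `D · α₀ = σ √(A B)`. The first equation is then `D · A / B = -A`,
and the second reduces to `D α₁² = 2σ√(A B) - M`, which is the definition of `α₁` once the
radicand `(2σ√(A B) - M) / D = (2√(A B) - σM) / |D|` is known to be nonnegative; that is exactly
the hypothesis `|M| < 2√(A B)`.
-/

lemma ite_pos_one_neg_one_eq_div_abs {d : ℝ} (hd : d ≠ 0) :
    (if 0 < d then (1 : ℝ) else -1) = d / |d| := by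
  rcases hd.lt_or_gt with hneg | hpos
  · rw [if_neg hneg.not_gt, abs_of_neg hneg, div_neg, div_self hd]
  · rw [if_pos hpos, abs_of_pos hpos, div_self hd]

lemma mul_sqrt_div_eq_div_abs_mul_sqrt_mul (x y : ℝ) :
    y * √(x / y) = y / |y| * √(x * y) := by
  rcases eq_or_ne y 0 with rfl | hy
  · simp
  have hxy : x / y = x * y / |y| ^ 2 := by
    rw [sq_abs]; field_simp
  rw [hxy, Real.sqrt_div' _ (sq_nonneg _), Real.sqrt_sq (abs_nonneg y)]
  ring

lemma div_nonneg_of_abs_le_of_ite_pos {m c d : ℝ} (h : |m| ≤ c) :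
    0 ≤ ((if 0 < d then (1 : ℝ) else -1) * c - m) / d := by
  obtain ⟨hlo, hhi⟩ := abs_le.mp h
  split_ifs with hd
  · exact div_nonneg (by linarith) hd.le
  · exact div_nonneg_of_nonpos (by linarith) (not_lt.mp hd)

theorem n_two_reduction_solutions_caseI
    (a0 a1 a2 b0 b1 b2 : ℝ)
    (hne : a2 ^ 2 ≠ b2 ^ 2)
    (h1 : 0 < (b0 ^ 2 - a0 ^ 2) * (b2 ^ 2 - a2 ^ 2))
    (h2 : |(-a1 ^ 2 + 2 * a0 * a2 + b1 ^ 2 - 2 * b0 * b2)|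
        < 2 * Real.sqrt ((b0 ^ 2 - a0 ^ 2) * (b2 ^ 2 - a2 ^ 2)))
    (ε : ℝ) (hε : ε = 1 ∨ ε = -1) :
    0 ≤ (b0 ^ 2 - a0 ^ 2) / (b2 ^ 2 - a2 ^ 2) ∧
    0 ≤ (2 * (if 0 < a2 ^ 2 - b2 ^ 2 then (1 : ℝ) else -1)
          * Real.sqrt ((b0 ^ 2 - a0 ^ 2) * (b2 ^ 2 - a2 ^ 2))
          - (-a1 ^ 2 + 2 * a0 * a2 + b1 ^ 2 - 2 * b0 * b2)) / (a2 ^ 2 - b2 ^ 2) ∧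
    (let α0 : ℝ := Real.sqrt ((b0 ^ 2 - a0 ^ 2) / (b2 ^ 2 - a2 ^ 2));
     let α1 : ℝ := ε * Real.sqrt
        ((2 * (if 0 < a2 ^ 2 - b2 ^ 2 then (1 : ℝ) else -1)
            * Real.sqrt ((b0 ^ 2 - a0 ^ 2) * (b2 ^ 2 - a2 ^ 2))
            - (-a1 ^ 2 + 2 * a0 * a2 + b1 ^ 2 - 2 * b0 * b2)) / (a2 ^ 2 - b2 ^ 2));
     a0 ^ 2 - b0 ^ 2 = (a2 ^ 2 - b2 ^ 2) * α0 ^ 2 ∧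
     -a1 ^ 2 + 2 * a0 * a2 + b1 ^ 2 - 2 * b0 * b2
        = (a2 ^ 2 - b2 ^ 2) * (2 * α0 - α1 ^ 2)) := by
  set A := b0 ^ 2 - a0 ^ 2
  set B := b2 ^ 2 - a2 ^ 2
  set D := a2 ^ 2 - b2 ^ 2
  set M := -a1 ^ 2 + 2 * a0 * a2 + b1 ^ 2 - 2 * b0 * b2
  set σ : ℝ := if 0 < D then 1 else -1
  have hD : D ≠ 0 := sub_ne_zero.mpr hne
  have hBD : B = -D := by ring
  have hα0 : 0 ≤ A / B := div_nonneg_iff.mpr (mul_nonneg_iff.mp h1.le)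
  have hα1 : 0 ≤ (2 * σ * √(A * B) - M) / D := by
    convert div_nonneg_of_abs_le_of_ite_pos (d := D) h2.le using 3
    ring
  have hDα0 : D * √(A / B) = σ * √(A * B) := by
    have hσ : σ = D / |D| := ite_pos_one_neg_one_eq_div_abs hD
    calc D * √(A / B) = -(B * √(A / B)) := by rw [hBD]; ring
      _ = -(B / |B| * √(A * B)) := by rw [mul_sqrt_div_eq_div_abs_mul_sqrt_mul]
      _ = σ * √(A * B) := by rw [hσ, hBD, abs_neg]; ring
  refine ⟨hα0, hα1, ?_, ?_⟩
  · rw [Real.sq_sqrt hα0, hBD]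
    field_simp
    ring
  · have hε2 : ε ^ 2 = 1 := by rcases hε with rfl | rfl <;> norm_num
    rw [mul_pow, hε2, one_mul, Real.sq_sqrt hα1, mul_sub, mul_div_cancel₀ _ hD,
      mul_left_comm, hDα0]
    ring
end

section
/- (Equivalence of boundary conditions, first version) Let Γ_1, Γ_2, Γ_3, Θ_1, Θ_2, Θ_3, Ξ_1, Ξ_2, Φ, Ψ ∈ M_n(ℝ) with Γ_1, Γ_3, Ξ_2 invertible, and suppose Θ_2 = Γ_2 Γ_1⁻¹ Θ_1 + Θ_3 Ξ_2⁻¹ Ξ_1 - Γ_3 Ξ_2⁻¹ Ξ_1 Γ_1⁻¹ Θ_1. Set Φ = Id and Ψ = Ξ_2 Γ_3⁻¹ Θ_3 Ξ_2⁻¹. Then for all vectors X̄, X ∈ ℝ^{2n}, the condition [[Γ_1, 0],[Γ_2, Γ_3]] X̄ + [[Θ_1, 0],[Θ_2, Θ_3]] X = 0 holds if and only if [[Γ_1, 0],[Φ Ξ_1, Φ Ξ_2]] X̄ + [[Θ_1, 0],[Ψ Ξ_1, Ψ Ξ_2]] X = 0, where [[A,0],[B,C]] denotes the 2n×2n block matrix.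 -/
open Matrix

theorem boundary_conditions_equiv_first (n : ℕ)
    (Γ1 Γ2 Γ3 Θ1 Θ2 Θ3 Ξ1 Ξ2 : Matrix (Fin n) (Fin n) ℝ)
    (hΓ1 : IsUnit Γ1) (hΓ3 : IsUnit Γ3) (hΞ2 : IsUnit Ξ2)
    (hΘ2 : Θ2 = Γ2 * Γ1⁻¹ * Θ1 + Θ3 * Ξ2⁻¹ * Ξ1 - Γ3 * Ξ2⁻¹ * Ξ1 * Γ1⁻¹ * Θ1)
    (Φ Ψ : Matrix (Fin n) (Fin n) ℝ)
    (hΦ : Φ = 1) (hΨ : Ψ = Ξ2 * Γ3⁻¹ * Θ3 * Ξ2⁻¹)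
    (Xb X : Fin n ⊕ Fin n → ℝ) :
    (fromBlocks Γ1 0 Γ2 Γ3 *ᵥ Xb + fromBlocks Θ1 0 Θ2 Θ3 *ᵥ X = 0) ↔
    (fromBlocks Γ1 0 (Φ * Ξ1) (Φ * Ξ2) *ᵥ Xb
      + fromBlocks Θ1 0 (Ψ * Ξ1) (Ψ * Ξ2) *ᵥ X = 0) := by
  have hΓ1d : IsUnit Γ1.det := (isUnit_iff_isUnit_det _).mp hΓ1
  have hΓ3d : IsUnit Γ3.det := (isUnit_iff_isUnit_det _).mp hΓ3
  have hΞ2d : IsUnit Ξ2.det := (isUnit_iff_isUnit_det _).mp hΞ2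
  have hΓ1i : Γ1⁻¹ * Γ1 = 1 := Matrix.nonsing_inv_mul _ hΓ1d
  have hΓ3i : Γ3⁻¹ * Γ3 = 1 := Matrix.nonsing_inv_mul _ hΓ3d
  have hΞ2i : Ξ2⁻¹ * Ξ2 = 1 := Matrix.nonsing_inv_mul _ hΞ2d
  have hΓ1i' : Γ1 * Γ1⁻¹ = 1 := Matrix.mul_nonsing_inv _ hΓ1d
  have hΓ3i' : Γ3 * Γ3⁻¹ = 1 := Matrix.mul_nonsing_inv _ hΓ3d
  have hΞ2i' : Ξ2 * Ξ2⁻¹ = 1 := Matrix.mul_nonsing_inv _ hΞ2d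
  have cΓ1 : ∀ x, Γ1⁻¹ * (Γ1 * x) = x := fun x => by
    rw [← Matrix.mul_assoc, hΓ1i, Matrix.one_mul]
  have cΓ1' : ∀ x, Γ1 * (Γ1⁻¹ * x) = x := fun x => by
    rw [← Matrix.mul_assoc, hΓ1i', Matrix.one_mul]
  have cΓ3 : ∀ x, Γ3⁻¹ * (Γ3 * x) = x := fun x => by
    rw [← Matrix.mul_assoc, hΓ3i, Matrix.one_mul]
  have cΓ3' : ∀ x, Γ3 * (Γ3⁻¹ * x) = x := fun x => by
    rw [← Matrix.mul_assoc, hΓ3i', Matrix.one_mul]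
  have cΞ2 : ∀ x, Ξ2⁻¹ * (Ξ2 * x) = x := fun x => by
    rw [← Matrix.mul_assoc, hΞ2i, Matrix.one_mul]
  have cΞ2' : ∀ x, Ξ2 * (Ξ2⁻¹ * x) = x := fun x => by
    rw [← Matrix.mul_assoc, hΞ2i', Matrix.one_mul]
  set B := (Ξ1 - Ξ2 * Γ3⁻¹ * Γ2) * Γ1⁻¹ with hB
  set B' := (Γ2 - Γ3 * Ξ2⁻¹ * Ξ1) * Γ1⁻¹ with hB'
  have h1 : fromBlocks Γ1 0 (Φ * Ξ1) (Φ * Ξ2)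
      = fromBlocks 1 0 B (Ξ2 * Γ3⁻¹) * fromBlocks Γ1 0 Γ2 Γ3 := by
    rw [Matrix.fromBlocks_multiply, Matrix.fromBlocks_inj]
    refine ⟨?_, ?_, ?_, ?_⟩ <;>
      simp [hB, hΦ, sub_mul, Matrix.mul_assoc, hΓ1i, hΓ3i, cΓ1, cΓ1', cΓ3, cΓ3', cΞ2, cΞ2']
  have h2 : fromBlocks Θ1 0 (Ψ * Ξ1) (Ψ * Ξ2)
      = fromBlocks 1 0 B (Ξ2 * Γ3⁻¹) * fromBlocks Θ1 0 Θ2 Θ3 := by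
    rw [Matrix.fromBlocks_multiply, Matrix.fromBlocks_inj]
    refine ⟨by simp, by simp, ?_, ?_⟩
    · simp [hB, hΨ, hΘ2, Matrix.mul_add, Matrix.mul_sub, sub_mul,
        Matrix.mul_assoc, hΓ1i, hΓ3i, hΞ2i, cΓ1, cΓ1', cΓ3, cΓ3', cΞ2, cΞ2']
    · simp [hΨ, Matrix.mul_assoc, hΞ2i, cΞ2]
  have h3 : fromBlocks Γ1 0 Γ2 Γ3
      = fromBlocks 1 0 B' (Γ3 * Ξ2⁻¹) * fromBlocks Γ1 0 (Φ * Ξ1) (Φ * Ξ2) := by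
    rw [Matrix.fromBlocks_multiply, Matrix.fromBlocks_inj]
    refine ⟨?_, ?_, ?_, ?_⟩ <;>
      simp [hB', hΦ, sub_mul, Matrix.mul_assoc, hΓ1i, hΞ2i, cΓ1, cΓ1', cΓ3, cΓ3', cΞ2, cΞ2']
  have h4 : fromBlocks Θ1 0 Θ2 Θ3
      = fromBlocks 1 0 B' (Γ3 * Ξ2⁻¹) * fromBlocks Θ1 0 (Ψ * Ξ1) (Ψ * Ξ2) := by
    rw [Matrix.fromBlocks_multiply, Matrix.fromBlocks_inj]
    refine ⟨by simp, by simp, ?_, ?_⟩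
    · simp [hB', hΨ, hΘ2, Matrix.mul_add, Matrix.mul_sub, sub_mul,
        Matrix.mul_assoc, hΓ1i, hΓ3i, hΞ2i, cΓ1, cΓ1', cΓ3, cΓ3', cΞ2, cΞ2']
      noncomm_ring
    · simp [hΨ, Matrix.mul_assoc, hΞ2i, hΓ3i, cΓ3', cΞ2]
  constructor
  · intro h
    rw [h1, h2, ← Matrix.mulVec_mulVec, ← Matrix.mulVec_mulVec,
      ← Matrix.mulVec_add, h, Matrix.mulVec_zero]
  · intro h
    rw [h3, h4, ← Matrix.mulVec_mulVec, ← Matrix.mulVec_mulVec,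
      ← Matrix.mulVec_add, h, Matrix.mulVec_zero]
end

section
/- (Equivalence of boundary conditions, second version) Let Γ_1, Γ_2, Γ_3, Θ_1, Θ_2, Θ_3, Ξ_1, Ξ_2 ∈ M_n(ℝ) with Θ_1, Θ_3, Ξ_2 invertible, and suppose Γ_2 = Θ_2 Θ_1⁻¹ Γ_1 + Γ_3 Ξ_2⁻¹ Ξ_1 - Θ_3 Ξ_2⁻¹ Ξ_1 Θ_1⁻¹ Γ_1. Set Ψ = Id and Φ = Ξ_2 Θ_3⁻¹ Γ_3 Ξ_2⁻¹. Then for all X̄, X ∈ ℝ^{2n}: [[Γ_1,0],[Γ_2,Γ_3]] X̄ + [[Θ_1,0],[Θ_2,Θ_3]] X = 0 if and only if [[Γ_1,0],[ΦΞ_1,ΦΞ_2]] X̄ + [[Θ_1,0],[ΨΞ_1,ΨΞ_2]] X = 0. -/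
open Matrix

theorem boundary_conditions_equiv_second (n : ℕ)
    (Γ1 Γ2 Γ3 Θ1 Θ2 Θ3 Ξ1 Ξ2 : Matrix (Fin n) (Fin n) ℝ)
    (hΘ1 : IsUnit Θ1) (hΘ3 : IsUnit Θ3) (hΞ2 : IsUnit Ξ2)
    (hΓ2 : Γ2 = Θ2 * Θ1⁻¹ * Γ1 + Γ3 * Ξ2⁻¹ * Ξ1 - Θ3 * Ξ2⁻¹ * Ξ1 * Θ1⁻¹ * Γ1)
    (Φ Ψ : Matrix (Fin n) (Fin n) ℝ)
    (hΨ : Ψ = 1) (hΦ : Φ = Ξ2 * Θ3⁻¹ * Γ3 * Ξ2⁻¹)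
    (Xb X : Fin n ⊕ Fin n → ℝ) :
    (fromBlocks Γ1 0 Γ2 Γ3 *ᵥ Xb + fromBlocks Θ1 0 Θ2 Θ3 *ᵥ X = 0) ↔
    (fromBlocks Γ1 0 (Φ * Ξ1) (Φ * Ξ2) *ᵥ Xb
      + fromBlocks Θ1 0 (Ψ * Ξ1) (Ψ * Ξ2) *ᵥ X = 0) := by
  subst hΓ2 hΨ hΦ
  have hdΘ1 : IsUnit Θ1.det := (isUnit_iff_isUnit_det _).mp hΘ1
  have hdΘ3 : IsUnit Θ3.det := (isUnit_iff_isUnit_det _).mp hΘ3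
  have hdΞ2 : IsUnit Ξ2.det := (isUnit_iff_isUnit_det _).mp hΞ2
  have hdM : IsUnit (Θ3 * Ξ2⁻¹).det := by
    rw [det_mul]
    exact hdΘ3.mul (isUnit_nonsing_inv_det _ hdΞ2)
  set x1 := Xb ∘ Sum.inl with hx1
  set x2 := Xb ∘ Sum.inr with hx2
  set y1 := X ∘ Sum.inl with hy1
  set y2 := X ∘ Sum.inr with hy2
  rw [fromBlocks_mulVec, fromBlocks_mulVec, fromBlocks_mulVec, fromBlocks_mulVec]
  have hsplit : ∀ f g f' g' : Fin n → ℝ,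
      Sum.elim f g + Sum.elim f' g' = 0 ↔ (f + f' = 0 ∧ g + g' = 0) := by
    intro f g f' g'
    constructor
    · intro h
      exact ⟨funext fun i => congrFun h (Sum.inl i), funext fun i => congrFun h (Sum.inr i)⟩
    · intro ⟨h1, h2⟩
      funext i
      cases i with
      | inl i => exact congrFun h1 i
      | inr i => exact congrFun h2 i
  rw [hsplit, hsplit]
  refine and_congr_right fun h1 => ?_
  simp only [Matrix.zero_mulVec, add_zero] at h1
  have hy : Θ1⁻¹ *ᵥ (Γ1 *ᵥ x1) = -y1 := by
    have h2 := congrArg (fun v => Θ1⁻¹ *ᵥ v) h1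
    simp only [Matrix.mulVec_add, Matrix.mulVec_mulVec,
      Matrix.nonsing_inv_mul _ hdΘ1, Matrix.one_mulVec, Matrix.mulVec_zero] at h2
    rw [Matrix.mulVec_mulVec]
    exact eq_neg_of_add_eq_zero_left h2
  have heq :
      (Θ2 * Θ1⁻¹ * Γ1 + Γ3 * Ξ2⁻¹ * Ξ1 - Θ3 * Ξ2⁻¹ * Ξ1 * Θ1⁻¹ * Γ1) *ᵥ x1 + Γ3 *ᵥ x2
          + (Θ2 *ᵥ y1 + Θ3 *ᵥ y2)
        = (Θ3 * Ξ2⁻¹) *ᵥ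
          ((Ξ2 * Θ3⁻¹ * Γ3 * Ξ2⁻¹ * Ξ1) *ᵥ x1 + (Ξ2 * Θ3⁻¹ * Γ3 * Ξ2⁻¹ * Ξ2) *ᵥ x2
            + ((1 * Ξ1) *ᵥ y1 + (1 * Ξ2) *ᵥ y2)) := by
    simp only [Matrix.add_mulVec, Matrix.sub_mulVec, ← Matrix.mulVec_mulVec, hy,
      Matrix.mulVec_neg, Matrix.mulVec_add]
    simp only [Matrix.mulVec_mulVec, Matrix.mul_assoc, Matrix.one_mul, Matrix.mul_one]
    simp only [Matrix.nonsing_inv_mul_cancel_left _ _ hdΞ2,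
      Matrix.mul_nonsing_inv_cancel_left _ _ hdΘ3,
      Matrix.nonsing_inv_mul _ hdΞ2, Matrix.mul_one]
    abel
  rw [heq]
  constructor
  · intro h
    have h2 := congrArg (fun v => (Θ3 * Ξ2⁻¹)⁻¹ *ᵥ v) h
    simpa only [Matrix.mulVec_mulVec, Matrix.nonsing_inv_mul _ hdM,
      Matrix.one_mulVec, Matrix.mulVec_zero] using h2
  · intro h
    rw [h, Matrix.mulVec_zero]
end
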